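/- arXiv:2512.12010 — 4 statements merged into one kernel-verified Lean document; each statement's English description precedes it below -/
import Mathlib

section
/- Let $A$ and $B$ be $n \times n$ complex matrices. Suppose every square submatrix of $A$ of size $p$ (formed by choosing any $p$ rows and any $p$ columns) has determinant of absolute value at most $\gamma_1^{2p}$, and every square submatrix of $B$ of size $p$ has determinant of absolute value at most $\gamma_2^{2p}$. Then $|\det(A+B)| \le (\gamma_1 + \gamma_2)^{2n}$. -/
/-!
Expanding `det (A + B)` multilinearly in the rows and then in the columns writes it as a sum,
over pairs `(S, T)` of index sets, of determinants of block matrices carrying `A` on `S × T`,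
`B` on `Sᶜ × Tᶜ` and zeros elsewhere. Such a determinant vanishes unless `|S| = |T|`, and is then
`± det A[S, T] * det B[Sᶜ, Tᶜ]`, of norm at most `γ₁ ^ (|S| + |T|) * γ₂ ^ ((n - |S|) + (n - |T|))`.
This bound factors into a function of `S` times the same function of `T`, and by the binomial
theorem its sum over all `S` and `T` is `((γ₁ + γ₂) ^ n) ^ 2`.
-/

open Finset Matrix

namespace Matrix

variable {ι R : Type*}

section Expansion

variable [Fintype ι] [DecidableEq ι] [CommRing R]

theorem det_add_eq_sum_det_rowPiecewise (M N : Matrix ι ι R) :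
    (M + N).det = ∑ S : Finset ι, (of fun i j => if i ∈ S then M i j else N i j).det := by
  refine (detRowAlternating.map_add_univ M N).trans (sum_congr rfl fun S _ => ?_)
  congr 1
  ext i j
  by_cases hi : i ∈ S <;> simp [Finset.piecewise, hi]

theorem det_add_eq_sum_det_colPiecewise (M N : Matrix ι ι R) :
    (M + N).det = ∑ T : Finset ι, (of fun i j => if j ∈ T then M i j else N i j).det := by
  rw [← det_transpose, transpose_add, det_add_eq_sum_det_rowPiecewise]
  refine sum_congr rfl fun T _ => ?_
  rw [← det_transpose]
  rfl

def laplaceTerm (A B : Matrix ι ι R) (S T : Finset ι) : Matrix ι ι R :=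
  of fun i j => if j ∈ T then (if i ∈ S then A i j else 0) else (if i ∈ S then 0 else B i j)

theorem det_add_eq_sum_det_laplaceTerm (A B : Matrix ι ι R) :
    (A + B).det = ∑ S : Finset ι, ∑ T : Finset ι, (laplaceTerm A B S T).det := by
  rw [det_add_eq_sum_det_rowPiecewise]
  refine sum_congr rfl fun S _ => ?_
  have hsplit : (of fun i j => if i ∈ S then A i j else B i j) =
      of (fun i j => if i ∈ S then A i j else 0) + of fun i j => if i ∈ S then 0 else B i j := by
    ext i j
    by_cases hi : i ∈ S <;> simp [hi]
  rw [hsplit, det_add_eq_sum_det_colPiecewise]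
  rfl

theorem det_laplaceTerm_eq_zero_of_card_ne (A B : Matrix ι ι R) {S T : Finset ι}
    (hST : #S ≠ #T) : (laplaceTerm A B S T).det = 0 := by
  rw [det_apply]
  refine sum_eq_zero fun σ _ => ?_
  suffices ∃ i, laplaceTerm A B S T (σ i) i = 0 by
    obtain ⟨i, hi⟩ := this
    rw [prod_eq_zero (f := fun j => laplaceTerm A B S T (σ j) j) (mem_univ i) hi, smul_zero]
  by_contra! h
  have hσ : ∀ i, σ i ∈ S ↔ i ∈ T := fun i => by
    have := h i
    by_cases hS : σ i ∈ S <;> by_cases hT : i ∈ T <;> simp_all [laplaceTerm]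
  have hTS : T.map σ.toEmbedding = S := by
    ext x
    rw [mem_map_equiv, ← hσ, Equiv.apply_symm_apply]
  exact hST (hTS ▸ card_map _)

theorem det_submatrix_laplaceTerm_eq (A B : Matrix ι ι R) {S T : Finset ι} {σ : Equiv.Perm ι}
    (hσ : ∀ i, σ i ∈ T ↔ i ∈ S) :
    ((laplaceTerm A B S T).submatrix id σ).det =
      (A.submatrix ((↑) : S → ι) (σ ∘ (↑))).det *
        (B.submatrix ((↑) : {i // i ∉ S} → ι) (σ ∘ (↑))).det := by
  have hAblock : toSquareBlockProp ((laplaceTerm A B S T).submatrix id σ) (· ∈ S) =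
      A.submatrix ((↑) : S → ι) (σ ∘ (↑)) := by
    ext i j
    simp [toSquareBlockProp, toBlock, laplaceTerm, i.2, (hσ j).2 j.2]
  have hBblock : toSquareBlockProp ((laplaceTerm A B S T).submatrix id σ) (· ∉ S) =
      B.submatrix ((↑) : {i // i ∉ S} → ι) (σ ∘ (↑)) := by
    ext i j
    simp [toSquareBlockProp, toBlock, laplaceTerm, i.2, (hσ j).not.2 j.2]
  rw [twoBlockTriangular_det _ (· ∈ S), hAblock, hBblock]
  · congr!
  · intro i hi j hj
    simp [laplaceTerm, hi, (hσ j).2 hj]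

end Expansion

def MinorsBoundedBy [NormedCommRing R] (A : Matrix ι ι R) (γ : ℝ) : Prop :=
  ∀ (p : ℕ) (f g : Fin p → ι), Function.Injective f → Function.Injective g →
    ‖(A.submatrix f g).det‖ ≤ γ ^ (2 * p)

theorem MinorsBoundedBy.norm_det_submatrix_le [NormedCommRing R] {A : Matrix ι ι R} {γ : ℝ}
    (hA : A.MinorsBoundedBy γ) {κ : Type*} [Fintype κ] [DecidableEq κ] {f g : κ → ι}
    (hf : Function.Injective f) (hg : Function.Injective g) :
    ‖(A.submatrix f g).det‖ ≤ γ ^ (2 * Fintype.card κ) := by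
  let e := Fintype.equivFin κ
  have hsub : A.submatrix f g = (A.submatrix (f ∘ e.symm) (g ∘ e.symm)).submatrix e e := by
    ext i j
    simp
  rw [hsub, det_submatrix_equiv_self]
  exact hA _ _ _ (hf.comp e.symm.injective) (hg.comp e.symm.injective)

section Norm

variable [Fintype ι] [DecidableEq ι] [NormedCommRing R]

theorem norm_det_submatrix_perm (M : Matrix ι ι R) (σ : Equiv.Perm ι) :
    ‖(M.submatrix id σ).det‖ = ‖M.det‖ := by
  rcases Int.units_eq_one_or (Equiv.Perm.sign σ) with h | h <;> simp [det_permute', h]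

theorem norm_det_laplaceTerm_le {A B : Matrix ι ι R} {γ₁ γ₂ : ℝ} (hA : A.MinorsBoundedBy γ₁)
    (hB : B.MinorsBoundedBy γ₂) (hγ₁ : 0 ≤ γ₁) (hγ₂ : 0 ≤ γ₂) (S T : Finset ι) :
    ‖(laplaceTerm A B S T).det‖ ≤
      γ₁ ^ #S * γ₂ ^ (Fintype.card ι - #S) * (γ₁ ^ #T * γ₂ ^ (Fintype.card ι - #T)) := by
  rcases ne_or_eq #S #T with hST | hST
  · rw [det_laplaceTerm_eq_zero_of_card_ne A B hST, norm_zero]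
    positivity
  obtain ⟨σ, hσ⟩ := Equiv.Perm.exists_map_finset_eq S T hST
  have hσT : ∀ i, σ i ∈ T ↔ i ∈ S := fun i => by
    rw [← hσ, mem_map_equiv, Equiv.symm_apply_apply]
  have hAS := hA.norm_det_submatrix_le Subtype.val_injective
    (σ.injective.comp (Subtype.val_injective (p := (· ∈ S))))
  have hBS := hB.norm_det_submatrix_le Subtype.val_injective
    (σ.injective.comp (Subtype.val_injective (p := (· ∉ S))))
  rw [Fintype.card_subtype_compl, Fintype.card_coe] at hBS
  rw [Fintype.card_coe] at hAS
  rw [← norm_det_submatrix_perm _ σ, det_submatrix_laplaceTerm_eq A B hσT, ← hST]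
  calc _ ≤ _ := norm_mul_le _ _
    _ ≤ γ₁ ^ (2 * #S) * γ₂ ^ (2 * (Fintype.card ι - #S)) :=
      mul_le_mul hAS hBS (norm_nonneg _) (by positivity)
    _ = _ := by ring

theorem norm_det_add_le {A B : Matrix ι ι R} {γ₁ γ₂ : ℝ} (hA : A.MinorsBoundedBy γ₁)
    (hB : B.MinorsBoundedBy γ₂) (hγ₁ : 0 ≤ γ₁) (hγ₂ : 0 ≤ γ₂) :
    ‖(A + B).det‖ ≤ (γ₁ + γ₂) ^ (2 * Fintype.card ι) := by
  set w : Finset ι → ℝ := fun S => γ₁ ^ #S * γ₂ ^ (Fintype.card ι - #S)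
  have hw : ∑ S, w S = (γ₁ + γ₂) ^ Fintype.card ι := by
    simpa [w] using sum_pow_mul_eq_add_pow γ₁ γ₂ (univ : Finset ι)
  calc ‖(A + B).det‖ = ‖∑ S, ∑ T, (laplaceTerm A B S T).det‖ := by
        rw [det_add_eq_sum_det_laplaceTerm]
    _ ≤ ∑ S, ∑ T, ‖(laplaceTerm A B S T).det‖ :=
      (norm_sum_le _ _).trans (sum_le_sum fun S _ => norm_sum_le _ _)
    _ ≤ ∑ S, ∑ T, w S * w T :=
      sum_le_sum fun S _ => sum_le_sum fun T _ => norm_det_laplaceTerm_le hA hB hγ₁ hγ₂ S T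
    _ = (γ₁ + γ₂) ^ (2 * Fintype.card ι) := by
      rw [← sum_mul_sum, hw, pow_mul']
      ring

end Norm

end Matrix

theorem det_add_le_of_submatrix_det_bound_general
    (n : ℕ) (γ₁ γ₂ : ℝ) (hγ₁ : 0 ≤ γ₁) (hγ₂ : 0 ≤ γ₂)
    (A B : Matrix (Fin n) (Fin n) ℂ)
    (hA : ∀ (p : ℕ) (f g : Fin p → Fin n), Function.Injective f → Function.Injective g →
      ‖(A.submatrix f g).det‖ ≤ γ₁ ^ (2 * p))
    (hB : ∀ (p : ℕ) (f g : Fin p → Fin n), Function.Injective f → Function.Injective g →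
      ‖(B.submatrix f g).det‖ ≤ γ₂ ^ (2 * p)) :
    ‖(A + B).det‖ ≤ (γ₁ + γ₂) ^ (2 * n) := by
  simpa using norm_det_add_le hA hB hγ₁ hγ₂

/-- If every `p × p` submatrix of `A` has determinant of absolute value at most `γ₁ ^ (2p)`,
and every `p × p` submatrix of `B` has determinant of absolute value at most `γ₂ ^ (2p)`,
then `|det (A + B)| ≤ (γ₁ + γ₂) ^ (2n)`. -/
theorem det_add_le_of_submatrix_det_bound
    (n : ℕ) (hn : 0 < n) (γ₁ γ₂ : ℝ) (hγ₁ : 0 ≤ γ₁) (hγ₂ : 0 ≤ γ₂)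
    (A B : Matrix (Fin n) (Fin n) ℂ)
    (hA : ∀ (p : ℕ) (f g : Fin p → Fin n), Function.Injective f → Function.Injective g →
      ‖(A.submatrix f g).det‖ ≤ γ₁ ^ (2 * p))
    (hB : ∀ (p : ℕ) (f g : Fin p → Fin n), Function.Injective f → Function.Injective g →
      ‖(B.submatrix f g).det‖ ≤ γ₂ ^ (2 * p)) :
    ‖(A + B).det‖ ≤ (γ₁ + γ₂) ^ (2 * n) :=
  det_add_le_of_submatrix_det_bound_general n γ₁ γ₂ hγ₁ hγ₂ A B hA hB
end

section
/- Let $t_1, \dots, t_{n-1} \in [0,1]$. Then there exist unit vectors $u_1, \dots, u_n \in \mathbb{R}^n$ such that for all $1 \le j < k \le n$, $\langle u_j, u_k \rangle = \prod_{i=j}^{k-1} t_i$. -/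
/-!
Starting from an orthonormal family `e`, set `u₀ = e₀` and
`u_{j+1} = t_j u_j + √(1 - t_j²) e_{j+1}`. Since `u_j` lies in the span of `e₀, …, e_j`,
it is orthogonal to `e_{j+1}`; hence each `u_j` is a unit vector by Pythagoras, and
`⟪u_j, u_{k+1}⟫ = t_k ⟪u_j, u_k⟫` for `j ≤ k`, which telescopes to the product.
-/

open Finset RealInnerProductSpace

section ChainVec

variable {E : Type*} [NormedAddCommGroup E] [InnerProductSpace ℝ E]

noncomputable def chainVec (e : ℕ → E) (t : ℕ → ℝ) : ℕ → E
  | 0 => e 0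
  | j + 1 => t j • chainVec e t j + √(1 - t j ^ 2) • e (j + 1)

variable {e : ℕ → E} {t : ℕ → ℝ} {N : ℕ}

theorem inner_chainVec_of_lt (he : Orthonormal ℝ (fun i : Fin N => e i)) {j k : ℕ} (hjk : j < k)
    (hk : k < N) : ⟪chainVec e t j, e k⟫ = 0 := by
  induction j with
  | zero => exact he.2 (i := ⟨0, by omega⟩) (j := ⟨k, hk⟩) (by simp [Fin.ext_iff]; omega)
  | succ j ih =>
    have hek : ⟪e (j + 1), e k⟫ = 0 :=
      he.2 (i := ⟨j + 1, by omega⟩) (j := ⟨k, hk⟩) (by simp [Fin.ext_iff]; omega)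
    simp [chainVec, inner_add_left, real_inner_smul_left, ih (by omega), hek]

theorem norm_chainVec (he : Orthonormal ℝ (fun i : Fin N => e i))
    (ht : ∀ j, j + 1 < N → |t j| ≤ 1) {j : ℕ} (hj : j < N) : ‖chainVec e t j‖ = 1 := by
  induction j with
  | zero => exact he.1 ⟨0, hj⟩
  | succ j ih =>
    have hperp : ⟪t j • chainVec e t j, √(1 - t j ^ 2) • e (j + 1)⟫ = 0 := by
      simp [real_inner_smul_left, real_inner_smul_right,
        inner_chainVec_of_lt he (Nat.lt_succ_self j) hj]
    have hs : √(1 - t j ^ 2) * √(1 - t j ^ 2) = 1 - t j ^ 2 :=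
      Real.mul_self_sqrt (by nlinarith [abs_le.mp (ht j hj)])
    have hsq : ‖chainVec e t (j + 1)‖ ^ 2 = 1 := by
      rw [sq, chainVec, norm_add_sq_eq_norm_sq_add_norm_sq_real hperp, norm_smul, norm_smul,
        ih (by omega), he.1 ⟨j + 1, hj⟩, Real.norm_eq_abs, Real.norm_eq_abs, mul_one, mul_one,
        abs_mul_abs_self, abs_mul_abs_self, hs]
      ring
    exact (pow_eq_one_iff_of_nonneg (norm_nonneg _) two_ne_zero).1 hsq

theorem inner_chainVec (he : Orthonormal ℝ (fun i : Fin N => e i))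
    (ht : ∀ j, j + 1 < N → |t j| ≤ 1) {j k : ℕ} (hjk : j ≤ k) (hk : k < N) :
    ⟪chainVec e t j, chainVec e t k⟫ = ∏ i ∈ Ico j k, t i := by
  induction k, hjk using Nat.le_induction with
  | base => simp [norm_chainVec he ht hk]
  | succ k hjk ih =>
    rw [chainVec, inner_add_right, real_inner_smul_right, real_inner_smul_right,
      inner_chainVec_of_lt he (by omega) hk, ih (by omega), prod_Ico_succ_top hjk]
    ring

end ChainVec

theorem exists_unit_vectors_inner_eq_prod_general (n : ℕ) (t : ℕ → ℝ)
    (ht : ∀ i, 1 ≤ i → i ≤ n - 1 → t i ∈ Set.Icc (0 : ℝ) 1) :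
    ∃ u : ℕ → EuclideanSpace ℝ (Fin n),
      (∀ j, 1 ≤ j → j ≤ n → ‖u j‖ = 1) ∧
      (∀ j k, 1 ≤ j → j < k → k ≤ n →
        (inner ℝ (u j) (u k) : ℝ) = ∏ i ∈ Finset.Ico j k, t i) := by
  let e : ℕ → EuclideanSpace ℝ (Fin n) := fun i =>
    if h : i < n then EuclideanSpace.basisFun (Fin n) ℝ ⟨i, h⟩ else 0
  have he : Orthonormal ℝ (fun i : Fin n => e i) := by
    rw [show (fun i : Fin n => e i) = EuclideanSpace.basisFun (Fin n) ℝ from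
      funext fun i => dif_pos i.isLt]
    exact (EuclideanSpace.basisFun (Fin n) ℝ).orthonormal
  have ht' : ∀ j, j + 1 < n → |t (j + 1)| ≤ 1 := fun j hj => by
    obtain ⟨h0, h1⟩ := ht (j + 1) (by omega) (by omega)
    exact abs_le.mpr ⟨by linarith, h1⟩
  refine ⟨fun j => chainVec e (fun i => t (i + 1)) (j - 1),
    fun j _ hj => norm_chainVec he ht' (by omega), fun j k hj hjk hk => ?_⟩
  rw [inner_chainVec he ht' (by omega) (by omega), prod_Ico_add' t (j - 1) (k - 1) 1,
    Nat.sub_add_cancel hj, Nat.sub_add_cancel (by omega)]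

/-- Given `t₁, …, t_{n-1} ∈ [0,1]`, there exist unit vectors `u₁, …, u_n ∈ ℝⁿ` with
`⟨u_j, u_k⟩ = ∏_{i=j}^{k-1} t_i` for all `1 ≤ j < k ≤ n`. -/
theorem exists_unit_vectors_inner_eq_prod (n : ℕ) (hn : 1 ≤ n) (t : ℕ → ℝ)
    (ht : ∀ i, 1 ≤ i → i ≤ n - 1 → t i ∈ Set.Icc (0 : ℝ) 1) :
    ∃ u : ℕ → EuclideanSpace ℝ (Fin n),
      (∀ j, 1 ≤ j → j ≤ n → ‖u j‖ = 1) ∧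
      (∀ j k, 1 ≤ j → j < k → k ≤ n →
        (inner ℝ (u j) (u k) : ℝ) = ∏ i ∈ Finset.Ico j k, t i) :=
  exists_unit_vectors_inner_eq_prod_general n t ht
end

section
/- Let $H$ and $O$ be Hermitian operators on a finite-dimensional Hilbert space and $\beta > 0$. Then the function $\lambda \mapsto \log \mathrm{Tr}(e^{-\beta(H + \lambda O)})$ is differentiable at $\lambda = 0$ with derivative $-\beta\, \mathrm{Tr}(O e^{-\beta H}) / \mathrm{Tr}(e^{-\beta H})$. -/
/-!
For a continuous linear functional `τ` with `τ (x * y) = τ (y * x)`, the derivative of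
`t ↦ τ ((a + t • b) ^ (k + 1))` is a sum of `k + 1` terms `τ (x ^ (k - i) * b * x ^ i)` with
`x = a + t • b`, all equal to `τ (b * x ^ k)` by cyclicity. Differentiating the exponential series termwise (the derivatives
are bounded by `‖τ‖ ‖b‖ (‖a‖ + ‖b‖) ^ k / k!` on the unit ball) gives
`d/dt τ (exp (a + t • b)) = τ (b * exp a)` at `t = 0`, the trace form of Duhamel's formula.
The logarithm is then harmless because `e^{-βH} = (e^{-βH/2})ᴴ e^{-βH/2}` is positive definite,
so its trace is positive.
-/

open NormedSpace
open scoped Nat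

theorem norm_mul_pow_le {𝔸 : Type*} [NormedRing 𝔸] (a b : 𝔸) (k : ℕ) :
    ‖a * b ^ k‖ ≤ ‖a‖ * ‖b‖ ^ k := by
  induction k with
  | zero => simp
  | succ k ih =>
    rw [pow_succ, ← mul_assoc, pow_succ, ← mul_assoc]
    exact (norm_mul_le _ _).trans (by gcongr)

theorem norm_add_smul_le_of_norm_le_one {𝕜 E : Type*} [NormedField 𝕜] [SeminormedAddCommGroup E]
    [NormedSpace 𝕜 E] {a b : E} {t : 𝕜} (ht : ‖t‖ ≤ 1) : ‖a + t • b‖ ≤ ‖a‖ + ‖b‖ :=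
  calc ‖a + t • b‖ ≤ ‖a‖ + ‖t‖ * ‖b‖ := (norm_add_le _ _).trans_eq (by rw [norm_smul])
    _ ≤ ‖a‖ + ‖b‖ := by gcongr; exact mul_le_of_le_one_left (norm_nonneg _) ht

section TraceFunctional

variable {𝕜 𝔸 : Type*} [RCLike 𝕜] [NormedRing 𝔸] [NormedAlgebra 𝕜 𝔸] (τ : 𝔸 →L[𝕜] 𝕜)

theorem map_sum_range_pow_mul_pow (hτ : ∀ x y, τ (x * y) = τ (y * x)) (x y : 𝔸) (k : ℕ) :
    τ (∑ i ∈ Finset.range (k + 1), x ^ (k - i) * y * x ^ i) = (k + 1) * τ (y * x ^ k) := by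
  have hterm : ∀ i ∈ Finset.range (k + 1), τ (x ^ (k - i) * y * x ^ i) = τ (y * x ^ k) := by
    intro i hi
    rw [hτ, ← mul_assoc, ← pow_add, Nat.add_sub_cancel' (Finset.mem_range_succ_iff.mp hi), hτ]
  rw [map_sum, Finset.sum_congr rfl hterm, Finset.sum_const, Finset.card_range, nsmul_eq_mul]
  push_cast
  rfl

theorem hasDerivAt_map_pow_succ_add_smul (hτ : ∀ x y, τ (x * y) = τ (y * x)) (a b : 𝔸) (k : ℕ)
    (t : 𝕜) :
    HasDerivAt (fun s : 𝕜 => τ ((a + s • b) ^ (k + 1))) ((k + 1) * τ (b * (a + t • b) ^ k)) t := by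
  have hpow := (((hasDerivAt_id' t).smul_const b).const_add a).fun_pow' (k + 1)
  simpa only [Function.comp_def, one_smul, Nat.pred_succ, map_sum_range_pow_mul_pow τ hτ] using
    τ.hasFDerivAt.comp_hasDerivAt t hpow

variable [CompleteSpace 𝔸]

theorem hasSum_map_mul_exp (x y : 𝔸) :
    HasSum (fun k => (k ! : 𝕜)⁻¹ * τ (x * y ^ k)) (τ (x * exp y)) := by
  simpa [mul_smul_comm] using
    (τ.comp (ContinuousLinearMap.mul 𝕜 _ x)).hasSum (exp_series_hasSum_exp' (𝕂 := 𝕜) y)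

theorem hasDerivAt_map_exp_add_smul (hτ : ∀ x y, τ (x * y) = τ (y * x)) (a b : 𝔸) :
    HasDerivAt (fun t : 𝕜 => τ (exp (a + t • b))) (τ (b * exp a)) 0 := by
  -- shifted by one index, so that the derivatives form the exponential series of `τ (b * ·)`
  set g : ℕ → 𝕜 → 𝕜 := fun k t => ((k + 1)! : 𝕜)⁻¹ * τ ((a + t • b) ^ (k + 1))
  set g' : ℕ → 𝕜 → 𝕜 := fun k t => (k ! : 𝕜)⁻¹ * τ (b * (a + t • b) ^ k)
  have hg : ∀ k t, t ∈ Metric.ball (0 : 𝕜) 1 → HasDerivAt (g k) (g' k t) t := fun k t _ => by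
    have hc : ((k + 1)! : 𝕜)⁻¹ * (k + 1) = (k ! : 𝕜)⁻¹ := by
      rw [Nat.factorial_succ]
      push_cast
      field_simp
    have h := (hasDerivAt_map_pow_succ_add_smul τ hτ a b k t).const_mul ((k + 1)! : 𝕜)⁻¹
    rwa [← mul_assoc, hc] at h
  have hg'_le : ∀ k, ∀ t ∈ Metric.ball (0 : 𝕜) 1,
      ‖g' k t‖ ≤ ‖τ‖ * ‖b‖ * ((‖a‖ + ‖b‖) ^ k / k !) := by
    intro k t ht
    have hbase : ‖a + t • b‖ ≤ ‖a‖ + ‖b‖ :=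
      norm_add_smul_le_of_norm_le_one (mem_ball_zero_iff.mp ht).le
    calc ‖g' k t‖ = (k ! : ℝ)⁻¹ * ‖τ (b * (a + t • b) ^ k)‖ := by simp [g']
      _ ≤ (k ! : ℝ)⁻¹ * (‖τ‖ * (‖b‖ * (‖a‖ + ‖b‖) ^ k)) := by
          gcongr
          exact (τ.le_opNorm _).trans (by gcongr; exact (norm_mul_pow_le _ _ _).trans (by gcongr))
      _ = ‖τ‖ * ‖b‖ * ((‖a‖ + ‖b‖) ^ k / k !) := by ring
  have hseries : ∀ t, HasSum (fun k => g k t) (τ (exp (a + t • b)) - τ 1) := fun t => by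
    simpa [g] using (hasSum_nat_add_iff' 1).mpr (hasSum_map_mul_exp τ 1 (a + t • b))
  have hmain := hasDerivAt_tsum_of_isPreconnected
    ((Real.summable_pow_div_factorial _).mul_left _) Metric.isOpen_ball
    (convex_ball (0 : 𝕜) 1).isPreconnected hg hg'_le (Metric.mem_ball_self one_pos)
    (hseries 0).summable (Metric.mem_ball_self one_pos)
  have hderiv : ∑' k, g' k 0 = τ (b * exp a) := by
    simpa [g'] using (hasSum_map_mul_exp τ b a).tsum_eq
  simpa [(hseries _).tsum_eq, hderiv] using hmain.add_const (τ 1)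

end TraceFunctional

open scoped ComplexOrder

namespace Matrix

variable {n 𝕜 : Type*} [Fintype n] [DecidableEq n] [RCLike 𝕜]

theorem IsHermitian.posDef_exp {A : Matrix n n 𝕜} (hA : A.IsHermitian) :
    (NormedSpace.exp A).PosDef := by
  set M := NormedSpace.exp ((2⁻¹ : ℝ) • A)
  have hM : M.IsHermitian := (hA.smul (IsSelfAdjoint.all _)).exp
  have hexp : NormedSpace.exp A = Mᴴ * M := by
    rw [hM.eq, ← exp_add_of_commute _ _ (Commute.refl _), ← add_smul]
    norm_num
  rw [hexp]
  exact .conjTranspose_mul_self M (mulVec_injective_iff_isUnit.mpr (isUnit_exp _))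

open scoped Matrix.Norms.Operator in
theorem hasDerivAt_trace_exp_add_smul (A B : Matrix n n 𝕜) :
    HasDerivAt (fun t : 𝕜 => trace (exp (A + t • B))) (trace (B * exp A)) 0 :=
  hasDerivAt_map_exp_add_smul (traceLinearMap n 𝕜 𝕜).toContinuousLinearMap trace_mul_comm A B

end Matrix

theorem hasDerivAt_log_trace_exp_general (N : ℕ) (H O : Matrix (Fin N) (Fin N) ℂ)
    (hH : H.IsHermitian) (β : ℝ) :
    HasDerivAt
      (fun l : ℝ => Real.log (Matrix.trace (exp ((-(β : ℂ)) • (H + (l : ℂ) • O)))).re)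
      (-β * (Matrix.trace (O * exp ((-(β : ℂ)) • H))).re /
        (Matrix.trace (exp ((-(β : ℂ)) • H))).re) 0 := by
  rcases isEmpty_or_nonempty (Fin N) with hN | hN
  · simpa [Matrix.trace_eq_zero_of_isEmpty] using hasDerivAt_const (0 : ℝ) (0 : ℝ)
  have hderiv : HasDerivAt (fun t : ℂ => Matrix.trace (exp ((-(β : ℂ)) • (H + t • O))))
      (-(β : ℂ) * Matrix.trace (O * exp ((-(β : ℂ)) • H))) 0 := by
    have h := Matrix.hasDerivAt_trace_exp_add_smul ((-(β : ℂ)) • H) ((-(β : ℂ)) • O)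
    rw [Matrix.smul_mul, Matrix.trace_smul, smul_eq_mul] at h
    simpa only [smul_add, smul_comm (-(β : ℂ))] using h
  have hpos : 0 < (Matrix.trace (exp ((-(β : ℂ)) • H))).re :=
    (RCLike.pos_iff.mp (hH.smul (IsSelfAdjoint.neg (Complex.conj_ofReal β))).posDef_exp.trace_pos).1
  convert (hderiv.real_of_complex (z := 0)).log (by simpa using hpos.ne') using 1
  simp

/-- For Hermitian `H`, `O` and `β > 0`, the map `λ ↦ log Tr(e^{-β(H+λO)})` is differentiable
at `λ = 0` with derivative `-β Tr(O e^{-βH}) / Tr(e^{-βH})`. -/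
theorem hasDerivAt_log_trace_exp (N : ℕ) (H O : Matrix (Fin N) (Fin N) ℂ)
    (hH : H.IsHermitian) (hO : O.IsHermitian) (β : ℝ) (hβ : 0 < β) :
    HasDerivAt
      (fun l : ℝ => Real.log (Matrix.trace (exp ((-(β : ℂ)) • (H + (l : ℂ) • O)))).re)
      (-β * (Matrix.trace (O * exp ((-(β : ℂ)) • H))).re /
        (Matrix.trace (exp ((-(β : ℂ)) • H))).re) 0 :=
  hasDerivAt_log_trace_exp_general N H O hH β
end

section
/- Let $z \in \mathbb{C}$, let $h$ be an $N \times N$ Hermitian matrix indexed by a finite metric space $(\Omega, d)$, and let $\theta > 0$. Fix $x_0 \in \Omega$ and let $U_\theta$ be the diagonal matrix with entries $(U_\theta)_{xx} = e^{\theta d(x, x_0)}$. Set $h_\theta = U_\theta h U_\theta^{-1}$. Suppose $\delta := \mathrm{dist}(z, \sigma(h)) > \|h_\theta - h\|$, where $\sigma(h)$ is the spectrum of $h$. Then $zI - h_\theta$ is invertible and for every $y \in \Omega$, $|((zI - h)^{-1})_{x_0 y}| \le \frac{e^{-\theta d(y, x_0)}}{\delta - \|h_\theta - h\|}$. -/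
/-!
Conjugating by `U = diag(e^{θ d(x, x₀)})` only rescales matrix entries, so
`((z - h)⁻¹)_{x₀ y} = e^{-θ d(y, x₀)} ((z - h')⁻¹)_{x₀ y}` with `h' = U⁻¹ h U`, and an entry is
bounded by the operator norm. Since `h` is Hermitian, `h' - h = (h_θ - h)ᴴ` has the same norm as
`h_θ - h`, so it remains to bound `‖(z - h')⁻¹‖`: this is the Neumann series perturbation of the
resolvent of the normal matrix `h`, whose norm is `dist(z, σ(h))⁻¹` by the spectral theorem.
-/

open Matrix
open scoped Matrix.Norms.L2Operator

section Perturbation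

variable {R : Type*} [NormedRing R] [CompleteSpace R] {c p : R} {δ : ℝ}

lemma IsUnit.sub_of_norm_lt (hc : IsUnit c) (hcδ : ‖Ring.inverse c‖ ≤ δ⁻¹) (hp : ‖p‖ < δ) :
    IsUnit (c - p) := by
  have hδ : 0 < δ := (norm_nonneg p).trans_lt hp
  have hsmall : ‖Ring.inverse c * p‖ < 1 := calc
    ‖Ring.inverse c * p‖ ≤ ‖Ring.inverse c‖ * ‖p‖ := norm_mul_le _ _
    _ ≤ δ⁻¹ * ‖p‖ := by gcongr
    _ < δ⁻¹ * δ := by gcongr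
    _ = 1 := inv_mul_cancel₀ hδ.ne'
  have hfactor : c - p = c * (1 - Ring.inverse c * p) := by
    rw [mul_sub, mul_one, ← mul_assoc, Ring.mul_inverse_cancel c hc, one_mul]
  exact hfactor ▸ hc.mul (Units.oneSub _ hsmall).isUnit

lemma norm_ringInverse_sub_le (hc : IsUnit c) (hcδ : ‖Ring.inverse c‖ ≤ δ⁻¹) (hp : ‖p‖ < δ) :
    ‖Ring.inverse (c - p)‖ ≤ (δ - ‖p‖)⁻¹ := by
  have hδ : 0 < δ := (norm_nonneg p).trans_lt hp
  set b := Ring.inverse c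
  set r := Ring.inverse (c - p)
  have hr : r = b + b * p * r := calc
    r = b * (c - p + p) * r := by rw [sub_add_cancel, Ring.inverse_mul_cancel c hc, one_mul]
    _ = b + b * p * r := by
      rw [mul_add, add_mul, mul_assoc b (c - p),
        Ring.mul_inverse_cancel _ (hc.sub_of_norm_lt hcδ hp), mul_one]
  have hr_le : ‖r‖ ≤ δ⁻¹ * (1 + ‖p‖ * ‖r‖) := calc
    ‖r‖ = ‖b + b * p * r‖ := congrArg norm hr
    _ ≤ ‖b‖ + ‖b‖ * ‖p‖ * ‖r‖ := by grw [norm_add_le, norm_mul_le, norm_mul_le]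
    _ ≤ δ⁻¹ * (1 + ‖p‖ * ‖r‖) := by
      rw [mul_add, mul_one, mul_assoc]
      gcongr
  rw [← one_div, le_div_iff₀ (sub_pos.2 hp)]
  linarith [(le_inv_mul_iff₀ hδ).1 hr_le]

end Perturbation

section Resolvent

variable {A : Type*} [CStarAlgebra A] {a b : A} {z : ℂ}

lemma isUnit_algebraMap_sub_of_infDist_pos (hz : 0 < Metric.infDist z (spectrum ℂ a)) :
    IsUnit (algebraMap ℂ A z - a) :=
  spectrum.notMem_iff.1 fun hmem => hz.ne' (Metric.infDist_zero_of_mem hmem)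

variable [IsStarNormal a]

lemma IsStarNormal.norm_ringInverse_algebraMap_sub_le
    (hz : 0 < Metric.infDist z (spectrum ℂ a)) :
    ‖Ring.inverse (algebraMap ℂ A z - a)‖ ≤ (Metric.infDist z (spectrum ℂ a))⁻¹ := by
  have hne : ∀ x ∈ spectrum ℂ a, z - x ≠ 0 := fun x hx hzx =>
    hz.ne' (sub_eq_zero.1 hzx ▸ Metric.infDist_zero_of_mem hx)
  have hcfc : cfc (fun x => z - x) a = algebraMap ℂ A z - a := by
    rw [cfc_sub .., cfc_const .., cfc_id' ..]
  rw [← hcfc, ← cfc_inv _ a hne]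
  refine norm_cfc_le (inv_nonneg.2 hz.le) fun x hx => ?_
  rw [norm_inv, ← dist_eq_norm]
  exact inv_anti₀ hz (Metric.infDist_le_dist_of_mem hx)

lemma IsStarNormal.isUnit_algebraMap_sub_of_norm_sub_lt
    (hb : ‖b - a‖ < Metric.infDist z (spectrum ℂ a)) : IsUnit (algebraMap ℂ A z - b) := by
  have hz := (norm_nonneg _).trans_lt hb
  simpa only [sub_sub_sub_cancel_right] using
    (isUnit_algebraMap_sub_of_infDist_pos hz).sub_of_norm_lt
      (norm_ringInverse_algebraMap_sub_le hz) hb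

lemma IsStarNormal.norm_ringInverse_algebraMap_sub_le_of_norm_sub_lt
    (hb : ‖b - a‖ < Metric.infDist z (spectrum ℂ a)) :
    ‖Ring.inverse (algebraMap ℂ A z - b)‖ ≤ (Metric.infDist z (spectrum ℂ a) - ‖b - a‖)⁻¹ := by
  have hz := (norm_nonneg _).trans_lt hb
  simpa only [sub_sub_sub_cancel_right] using norm_ringInverse_sub_le
    (isUnit_algebraMap_sub_of_infDist_pos hz) (norm_ringInverse_algebraMap_sub_le hz) hb

end Resolvent

section Conjugation

variable {n α : Type*} [Fintype n] [DecidableEq n]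

lemma Matrix.mul_smul_one_sub_mul_nonsing_inv [CommRing α] {D : Matrix n n α} (hD : IsUnit D.det)
    (z : α) (X : Matrix n n α) : D * (z • 1 - X) * D⁻¹ = z • 1 - D * X * D⁻¹ := by
  rw [Matrix.mul_sub, Matrix.sub_mul, mul_smul_comm, Matrix.mul_one, smul_mul_assoc,
    mul_nonsing_inv _ hD]

lemma Matrix.nonsing_inv_mul_mul_nonsing_inv [CommRing α] {D : Matrix n n α} (hD : IsUnit D.det)
    (X : Matrix n n α) : (D * X * D⁻¹)⁻¹ = D * X⁻¹ * D⁻¹ := by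
  rw [Matrix.mul_inv_rev, Matrix.mul_inv_rev, nonsing_inv_nonsing_inv _ hD, Matrix.mul_assoc]

lemma Matrix.diagonal_mul_mul_inv_diagonal_apply [Field α] {w : n → α} (hw : ∀ i, w i ≠ 0)
    (M : Matrix n n α) (i j : n) : (diagonal w * M * (diagonal w)⁻¹) i j = w i * M i j / w j := by
  have hinv : (diagonal w)⁻¹ = diagonal fun i => (w i)⁻¹ :=
    inv_eq_right_inv (by rw [diagonal_mul_diagonal, ← diagonal_one]; simp [hw])
  rw [hinv, mul_diagonal, diagonal_mul, div_eq_mul_inv]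

lemma Matrix.inv_smul_one_sub_apply_eq_diagonal_conj [Field α] {w : n → α} (hw : ∀ i, w i ≠ 0)
    (z : α) (h : Matrix n n α) (i j : n) :
    (z • 1 - h)⁻¹ i j = w i * (z • 1 - (diagonal w)⁻¹ * h * diagonal w)⁻¹ i j / w j := by
  have hD : IsUnit (diagonal w).det := by simp [det_diagonal, Finset.prod_ne_zero_iff, hw]
  have hconj : z • 1 - h =
      diagonal w * (z • 1 - (diagonal w)⁻¹ * h * diagonal w) * (diagonal w)⁻¹ := by
    rw [mul_smul_one_sub_mul_nonsing_inv hD]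
    simp [Matrix.mul_assoc, mul_nonsing_inv_cancel_left _ _ hD, mul_nonsing_inv _ hD]
  rw [hconj, nonsing_inv_mul_mul_nonsing_inv hD, diagonal_mul_mul_inv_diagonal_apply hw]

lemma Matrix.IsHermitian.conjTranspose_mul_mul_nonsing_inv [CommRing α] [StarRing α]
    {D X : Matrix n n α} (hD : D.IsHermitian) (hX : X.IsHermitian) :
    (D * X * D⁻¹)ᴴ = D⁻¹ * X * D := by
  rw [conjTranspose_mul, conjTranspose_mul, conjTranspose_nonsing_inv, hD.eq, hX.eq,
    Matrix.mul_assoc]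

end Conjugation

section L2OpNorm

variable {m n 𝕜 : Type*} [RCLike 𝕜] [Fintype m] [Fintype n]

lemma Matrix.norm_apply_le_l2_opNorm [DecidableEq n] (A : Matrix m n 𝕜) (i : m) (j : n) :
    ‖A i j‖ ≤ ‖A‖ := by
  set v := (EuclideanSpace.equiv m 𝕜).symm (A *ᵥ EuclideanSpace.single j (1 : 𝕜))
  calc ‖A i j‖ = ‖v i‖ := by simp [v]
    _ ≤ ‖v‖ := PiLp.norm_apply_le v i
    _ ≤ ‖A‖ * ‖EuclideanSpace.single j (1 : 𝕜)‖ := l2_opNorm_mulVec A _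
    _ = ‖A‖ := by simp

lemma Matrix.IsHermitian.l2_opNorm_nonsing_inv_mul_mul_sub [DecidableEq n] {D X : Matrix n n 𝕜}
    (hD : D.IsHermitian) (hX : X.IsHermitian) : ‖D⁻¹ * X * D - X‖ = ‖D * X * D⁻¹ - X‖ := by
  rw [← hD.conjTranspose_mul_mul_nonsing_inv hX, ← hX.eq, ← conjTranspose_sub,
    l2_opNorm_conjTranspose, hX.eq]

end L2OpNorm

theorem resolvent_exponential_decay_general {Ω : Type*} [Fintype Ω] [DecidableEq Ω] [MetricSpace Ω]
    (z : ℂ) (h : Matrix Ω Ω ℂ) (hh : h.IsHermitian) (θ : ℝ) (x₀ : Ω) :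
    let U : Matrix Ω Ω ℂ := Matrix.diagonal fun x => (Real.exp (θ * dist x x₀) : ℂ)
    let hθm : Matrix Ω Ω ℂ := U * h * U⁻¹
    let δ : ℝ := Metric.infDist z (spectrum ℂ h)
    ‖Matrix.toEuclideanCLM (𝕜 := ℂ) (hθm - h)‖ < δ →
      (IsUnit (z • (1 : Matrix Ω Ω ℂ) - hθm) ∧
       ∀ y : Ω, ‖((z • (1 : Matrix Ω Ω ℂ) - h)⁻¹) x₀ y‖
          ≤ Real.exp (-θ * dist y x₀) /
            (δ - ‖Matrix.toEuclideanCLM (𝕜 := ℂ) (hθm - h)‖)) := by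
  intro U hθm δ hlt
  rw [← cstar_norm_def] at hlt ⊢
  have := hh.isSelfAdjoint.isStarNormal
  have hU : U.IsHermitian :=
    isHermitian_diagonal_of_self_adjoint _ (funext fun x => Complex.conj_ofReal _)
  have hnorm := hU.l2_opNorm_nonsing_inv_mul_mul_sub hh
  have hres : ‖(z • 1 - U⁻¹ * h * U)⁻¹‖ ≤ (δ - ‖hθm - h‖)⁻¹ := by
    simpa only [hnorm, Algebra.algebraMap_eq_smul_one, ← nonsing_inv_eq_ringInverse] using
      IsStarNormal.norm_ringInverse_algebraMap_sub_le_of_norm_sub_lt (hnorm.trans_lt hlt)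
  refine ⟨by simpa only [Algebra.algebraMap_eq_smul_one] using
    IsStarNormal.isUnit_algebraMap_sub_of_norm_sub_lt hlt, fun y => ?_⟩
  calc ‖(z • 1 - h)⁻¹ x₀ y‖ = ‖(z • 1 - U⁻¹ * h * U)⁻¹ x₀ y‖ / Real.exp (θ * dist y x₀) := by
        rw [inv_smul_one_sub_apply_eq_diagonal_conj
          (w := fun x => (Real.exp (θ * dist x x₀) : ℂ)) (fun x => by simp) z h x₀ y]
        simp [U, Complex.norm_exp]
    _ ≤ ‖(z • 1 - U⁻¹ * h * U)⁻¹‖ / Real.exp (θ * dist y x₀) := by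
        gcongr; exact norm_apply_le_l2_opNorm _ _ _
    _ ≤ (δ - ‖hθm - h‖)⁻¹ / Real.exp (θ * dist y x₀) := by gcongr
    _ = Real.exp (-θ * dist y x₀) / (δ - ‖hθm - h‖) := by
        rw [neg_mul, Real.exp_neg]; ring

/-- Combes–Thomas type bound: conjugating by the exponential weight
`U_θ = diag(e^{θ d(x,x₀)})`, if `δ = dist(z, σ(h))` exceeds `‖h_θ - h‖`, then `zI - h_θ` is
invertible and the resolvent entries decay as
`|((zI-h)⁻¹)_{x₀ y}| ≤ e^{-θ d(y,x₀)} / (δ - ‖h_θ - h‖)`. -/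
theorem resolvent_exponential_decay {Ω : Type*} [Fintype Ω] [DecidableEq Ω] [MetricSpace Ω]
    (z : ℂ) (h : Matrix Ω Ω ℂ) (hh : h.IsHermitian) (θ : ℝ) (hθ : 0 < θ) (x₀ : Ω) :
    let U : Matrix Ω Ω ℂ := Matrix.diagonal fun x => (Real.exp (θ * dist x x₀) : ℂ)
    let hθm : Matrix Ω Ω ℂ := U * h * U⁻¹
    let δ : ℝ := Metric.infDist z (spectrum ℂ h)
    ‖Matrix.toEuclideanCLM (𝕜 := ℂ) (hθm - h)‖ < δ →
      (IsUnit (z • (1 : Matrix Ω Ω ℂ) - hθm) ∧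
       ∀ y : Ω, ‖((z • (1 : Matrix Ω Ω ℂ) - h)⁻¹) x₀ y‖
          ≤ Real.exp (-θ * dist y x₀) /
            (δ - ‖Matrix.toEuclideanCLM (𝕜 := ℂ) (hθm - h)‖)) :=
  resolvent_exponential_decay_general z h hh θ x₀
end
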